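/- With the sl(2)[t]-action on the polynomial ring P = C[β^u_k, γ^{u'}_k : u ∈ {x,y,h}, k ≥ 0] given by (3.11)-(3.13), suppose ω ∈ P^{A_+} (i.e., ω is annihilated by all v^u(n), u ∈ {x,y,h}, n ≥ 0) is nonzero. Then the projection of ω onto its component of γ^{y'}-degree 0 is nonzero; i.e., ω has a nonzero term containing no variable γ^{y'}_k. -/
import Mathlib


open MvPolynomial Finsupp

/-- Generators: `((u, true), k)` is `β^u_k`, `((u, false), k)` is `γ^{u'}_k`, `u : Fin 3` encodes
`x, y, h` as `0, 1, 2`, and `k` is the level. -/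
abbrev PGen : Type := (Fin 3 × Bool) × ℕ

abbrev Pring : Type := MvPolynomial PGen ℂ

noncomputable def Beta (u : Fin 3) (k : ℕ) : Pring := X ((u, true), k)
noncomputable def Gam (u : Fin 3) (k : ℕ) : Pring := X ((u, false), k)

/-- `c^n_k = k (k-1) ⋯ (k-n+1)`, which vanishes for `n > k` and equals `1` for `n = 0`. -/
noncomputable def cnk (n k : ℕ) : ℂ := (k.descFactorial n : ℂ)

/-- `v^h(n)`: `β^u_k ↦ -c^n_k β^u_{k-n}`, `γ^{u'}_k ↦ c^n_k γ^{u'}_{k-n}`. -/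
noncomputable def vH (n : ℕ) : Derivation ℂ Pring Pring :=
  mkDerivation ℂ (fun g => match g with
    | ((u, true), k) => -(cnk n k) • Beta u (k - n)
    | ((u, false), k) => (cnk n k) • Gam u (k - n))

/-- `v^x(n)`: `β^u_k ↦ -(1/2) c^n_k γ^{u'}_{k-n}`, `γ^{u'}_k ↦ 0`. -/
noncomputable def vX (n : ℕ) : Derivation ℂ Pring Pring :=
  mkDerivation ℂ (fun g => match g with
    | ((u, true), k) => (-(2⁻¹ : ℂ) * cnk n k) • Gam u (k - n)
    | ((_, false), _) => 0)

/-- `v^y(n)`: `β^u_k ↦ 0`, `γ^{u'}_k ↦ -(1/2) c^n_k β^u_{k-n}`. -/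
noncomputable def vY (n : ℕ) : Derivation ℂ Pring Pring :=
  mkDerivation ℂ (fun g => match g with
    | ((_, true), _) => 0
    | ((u, false), k) => (-(2⁻¹ : ℂ) * cnk n k) • Beta u (k - n))


noncomputable def Del : Derivation ℂ Pring Pring :=
  mkDerivation ℂ (fun g => ((g.2 + 1 : ℕ) : ℂ) • (X (g.1, g.2 + 1) : Pring))

/-- `τ^x_0 = 2 β^x_0 γ^{h'}_0 - β^h_0 γ^{y'}_0`, `τ^y_0 = -2 β^y_0 γ^{h'}_0 + β^h_0 γ^{x'}_0`,
`τ^h_0 = -2 β^x_0 γ^{x'}_0 + 2 β^y_0 γ^{y'}_0`. -/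
noncomputable def tau0 : Fin 3 → Pring :=
  ![2 * Beta 0 0 * Gam 2 0 - Beta 2 0 * Gam 1 0,
    -2 * Beta 1 0 * Gam 2 0 + Beta 2 0 * Gam 0 0,
    -2 * Beta 0 0 * Gam 0 0 + 2 * Beta 1 0 * Gam 1 0]

/-- `τ^u_k = ∂^k τ^u_0`. -/
noncomputable def tau (u : Fin 3) (k : ℕ) : Pring := (fun p => Del p)^[k] (tau0 u)

/-- The subalgebra `P_τ` generated by the `τ^u_k`. -/
noncomputable def Ptau : Subalgebra ℂ Pring :=
  Algebra.adjoin ℂ (Set.range fun p : Fin 3 × ℕ => tau p.1 p.2)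

/-- `P^{A_+}`: the polynomials annihilated by all `v^u(n)`, `u ∈ {x,y,h}`, `n ≥ 0`. -/
def AplusInv (ω : Pring) : Prop := ∀ n : ℕ, vH n ω = 0 ∧ vX n ω = 0 ∧ vY n ω = 0

noncomputable def gdeg (m : PGen →₀ ℕ) : ℕ :=
  m.sum fun i c => if i.1 = ((1 : Fin 3), false) then c else 0

lemma gdeg_add (a b : PGen →₀ ℕ) : gdeg (a + b) = gdeg a + gdeg b := by
  unfold gdeg
  rw [Finsupp.sum_add_index]
  · intro i _; simp
  · intro i _ c1 c2; split <;> simp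

lemma gdeg_single (i : PGen) (c : ℕ) :
    gdeg (Finsupp.single i c) = if i.1 = ((1 : Fin 3), false) then c else 0 := by
  unfold gdeg
  rw [Finsupp.sum_single_index]; simp

lemma sub_single_add (m : PGen →₀ ℕ) (i : PGen) (hi : m i ≠ 0) :
    m - Finsupp.single i 1 + Finsupp.single i 1 = m :=
  tsub_add_cancel_of_le (Finsupp.single_le_iff.2 (Nat.one_le_iff_ne_zero.2 hi))

lemma gdeg_sub_single (m : PGen →₀ ℕ) (i : PGen) (hi : m i ≠ 0) :
    gdeg (m - Finsupp.single i 1) + (if i.1 = ((1 : Fin 3), false) then 1 else 0) = gdeg m := by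
  conv_rhs => rw [← sub_single_add m i hi]
  rw [gdeg_add, gdeg_single]

lemma one_le_gdeg (m : PGen →₀ ℕ) (k : ℕ) (h : m (((1 : Fin 3), false), k) ≠ 0) :
    1 ≤ gdeg m := by
  unfold gdeg
  rw [Finsupp.sum]
  have hmem : ((((1:Fin 3), false), k) : PGen) ∈ m.support := Finsupp.mem_support_iff.2 h
  calc 1 ≤ m (((1 : Fin 3), false), k) := Nat.one_le_iff_ne_zero.2 h
  _ = (if ((((1:Fin 3), false), k) : PGen).1 = ((1 : Fin 3), false) then m (((1:Fin 3), false), k) else 0) := by simp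
  _ ≤ _ := Finset.single_le_sum (f := fun i => if i.1 = ((1:Fin 3), false) then m i else 0) (fun i _ => Nat.zero_le _) hmem

noncomputable def bY (n : ℕ) : PGen → Pring := fun g => match g with
    | ((_, true), _) => 0
    | ((u, false), k) => (-(2⁻¹ : ℂ) * cnk n k) • Beta u (k - n)

lemma vY_eq (n : ℕ) : vY n = mkDerivation ℂ (bY n) := rfl

noncomputable def vterm (n : ℕ) (t m : PGen →₀ ℕ) : PGen → ℂ := fun i =>
  match i with
  | ((_, true), _) => 0
  | ((u, false), k) =>
    if m - Finsupp.single ((u,false),k) 1 + Finsupp.single ((u,true), k - n) 1 = t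
    then (m ((u,false),k) : ℂ) * (-(2⁻¹ : ℂ) * cnk n k) else 0

lemma coeff_vY (n : ℕ) (f : Pring) (t : PGen →₀ ℕ) :
    coeff t (vY n f) = ∑ m ∈ f.support, coeff m f * ∑ i ∈ m.support, vterm n t m i := by
  conv_lhs => rw [f.as_sum, vY_eq, map_sum]
  rw [coeff_sum]
  refine Finset.sum_congr rfl fun m hm => ?_
  rw [mkDerivation_monomial, coeff_smul, smul_eq_mul]
  congr 1
  rw [Finsupp.sum, coeff_sum]
  refine Finset.sum_congr rfl fun i hi => ?_
  obtain ⟨⟨u, b⟩, k⟩ := i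
  cases b
  · show coeff t (monomial _ _ • ((-(2⁻¹ : ℂ) * cnk n k) • Beta u (k - n))) = _
    rw [smul_eq_mul, mul_smul_comm, coeff_smul, Beta, X, smul_eq_mul, monomial_mul,
      mul_one, coeff_monomial]
    show _ = vterm n t m ((u, false), k)
    simp only [vterm]
    split <;> ring
  · show coeff t (monomial _ _ • (0 : Pring)) = vterm n t m ((u, true), k)
    simp [vterm]

/-- Lemma 4.15: if `ω ∈ P^{A_+}` is nonzero, then its projection onto
`γ^{y'}`-degree `0` is nonzero; i.e. `ω` has a nonzero term containing no variable
`γ^{y'}_k`. -/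
theorem stmt10 (ω : Pring) (hne : ω ≠ 0) (hω : AplusInv ω) :
    ∃ m ∈ ω.support, ∀ k : ℕ, m (((1 : Fin 3), false), k) = 0 := by
  by_contra hc
  push_neg at hc
  have hsupp : ω.support.Nonempty := support_nonempty.2 hne
  have hdne : (ω.support.image gdeg).Nonempty := hsupp.image _
  set d := (ω.support.image gdeg).min' hdne with hd
  obtain ⟨m1, hm1, hm1d⟩ := Finset.mem_image.1 ((ω.support.image gdeg).min'_mem hdne)
  set S := ω.support.filter (fun m => gdeg m = d) with hS
  have hSne : S.Nonempty := ⟨m1, Finset.mem_filter.2 ⟨hm1, hm1d⟩⟩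
  have hdle : ∀ m ∈ ω.support, d ≤ gdeg m := fun m hm =>
    Finset.min'_le _ _ (Finset.mem_image_of_mem _ hm)
  have hd1 : 1 ≤ d := by
    obtain ⟨k, hk⟩ := hc m1 hm1
    rw [hd, ← hm1d]; exact one_le_gdeg m1 k hk
  set innerK : (PGen →₀ ℕ) → ℕ := fun m =>
    (m.support.filter (fun i => i.1 = ((1 : Fin 3), false))).sup (fun i => i.2) with hinnerK
  set K := S.sup innerK with hK
  obtain ⟨m0, hm0S, hm0K⟩ := Finset.exists_mem_eq_sup S hSne innerK
  have hm0supp : m0 ∈ ω.support := (Finset.mem_filter.1 hm0S).1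
  have hm0d : gdeg m0 = d := (Finset.mem_filter.1 hm0S).2
  -- m0 (G K) ≠ 0
  have hm0GK : m0 (((1 : Fin 3), false), K) ≠ 0 := by
    obtain ⟨k0, hk0⟩ := hc m0 hm0supp
    have hfne : (m0.support.filter (fun i => i.1 = ((1 : Fin 3), false))).Nonempty :=
      ⟨(((1 : Fin 3), false), k0), Finset.mem_filter.2 ⟨Finsupp.mem_support_iff.2 hk0, rfl⟩⟩
    obtain ⟨i, hi, hival⟩ := Finset.exists_mem_eq_sup _ hfne (fun i : PGen => i.2)
    obtain ⟨hisupp, hi1⟩ := Finset.mem_filter.1 hi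
    have : i = (((1 : Fin 3), false), K) := by
      have h2 : i.2 = K := by rw [hK, hm0K]; exact hival.symm
      rw [Prod.ext_iff]; exact ⟨hi1, h2⟩
    rw [← this]; exact Finsupp.mem_support_iff.1 hisupp
  -- maximality of K
  have hKmax : ∀ m ∈ S, ∀ j : ℕ, m (((1 : Fin 3), false), j) ≠ 0 → j ≤ K := by
    intro m hm j hj
    have : ((((1 : Fin 3), false), j) : PGen) ∈
        m.support.filter (fun i => i.1 = ((1 : Fin 3), false)) :=
      Finset.mem_filter.2 ⟨Finsupp.mem_support_iff.2 hj, rfl⟩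
    calc j ≤ innerK m := Finset.le_sup (f := fun i : PGen => i.2) this
    _ ≤ K := Finset.le_sup hm
  -- the target monomial
  set t : PGen →₀ ℕ := m0 - Finsupp.single (((1 : Fin 3), false), K) 1
      + Finsupp.single (((1 : Fin 3), true), 0) 1 with ht
  have hgt : gdeg t + 1 = d := by
    rw [ht, gdeg_add, gdeg_single]
    simp only [if_neg (by simp : ¬((((1:Fin 3), true), 0) : PGen).1 = ((1:Fin 3), false)), add_zero]
    rw [← hm0d, ← gdeg_sub_single m0 _ hm0GK]
    simp
  -- key claim
  have key : ∀ m ∈ ω.support, ∀ i : PGen, vterm K t m i ≠ 0 →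
      m = m0 ∧ i = (((1 : Fin 3), false), K) := by
    intro m hm i hv
    obtain ⟨⟨u, b⟩, k⟩ := i
    cases b
    case true => exact absurd rfl hv
    simp only [vterm] at hv
    split at hv
    case isFalse => exact absurd rfl hv
    case isTrue heq =>
    have hmik : m ((u, false), k) ≠ 0 := by
      intro h0; rw [h0] at hv; simp at hv
    have hcnk : cnk K k ≠ 0 := by
      intro h0; rw [h0] at hv; simp at hv
    have hkK : K ≤ k := by
      by_contra hlt
      exact hcnk (by simp [cnk, Nat.descFactorial_eq_zero_iff_lt.2 (Nat.lt_of_not_le hlt)])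
    -- gdeg of LHS of heq
    have hgl : gdeg (m - Finsupp.single ((u, false), k) 1) = gdeg t := by
      have := congrArg gdeg heq
      rwa [gdeg_add, gdeg_single,
        if_neg (by simp : ¬(((u, true), k - K) : PGen).1 = ((1:Fin 3), false)), add_zero] at this
    by_cases hu : u = 1
    · subst hu
      have hgm : gdeg m = d := by
        have := gdeg_sub_single m _ hmik
        rw [if_pos rfl, hgl] at this
        omega
      have hmS : m ∈ S := Finset.mem_filter.2 ⟨hm, hgm⟩
      have hkle : k ≤ K := hKmax m hmS k hmik
      have hkK' : k = K := le_antisymm hkle hkK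
      subst hkK'
      refine ⟨?_, rfl⟩
      rw [Nat.sub_self] at heq
      have hcancel : m - Finsupp.single (((1:Fin 3), false), K) 1
          = m0 - Finsupp.single (((1:Fin 3), false), K) 1 :=
        add_right_cancel (heq.trans ht)
      calc m = m - Finsupp.single (((1:Fin 3), false), K) 1
            + Finsupp.single (((1:Fin 3), false), K) 1 := (sub_single_add m _ hmik).symm
      _ = m0 - Finsupp.single (((1:Fin 3), false), K) 1
            + Finsupp.single (((1:Fin 3), false), K) 1 := by rw [hcancel]
      _ = m0 := sub_single_add m0 _ hm0GK
    · exfalso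
      have := gdeg_sub_single m _ hmik
      rw [if_neg (by simp [hu] : ¬(((u, false), k) : PGen).1 = ((1:Fin 3), false)),
        add_zero, hgl] at this
      have := hdle m hm
      omega
  -- compute the coefficient
  have hcoeff : coeff t (vY K ω) =
      coeff m0 ω * ((m0 (((1:Fin 3), false), K) : ℂ) * (-(2⁻¹ : ℂ) * cnk K K)) := by
    rw [coeff_vY]
    rw [Finset.sum_eq_single_of_mem m0 hm0supp]
    · congr 1
      rw [Finset.sum_eq_single_of_mem (((1:Fin 3), false), K)
          (Finsupp.mem_support_iff.2 hm0GK)]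
      · show vterm K t m0 (((1:Fin 3), false), K) = _
        simp only [vterm]
        rw [if_pos]
        rw [ht, Nat.sub_self]
      · intro i hi hine
        by_contra hvne
        exact hine (key m0 hm0supp i hvne).2
    · intro m hm hmne
      have : ∑ i ∈ m.support, vterm K t m i = 0 := by
        apply Finset.sum_eq_zero
        intro i hi
        by_contra hvne
        exact hmne (key m hm i hvne).1
      rw [this, mul_zero]
  have hzero : coeff t (vY K ω) = 0 := by rw [(hω K).2.2, coeff_zero]
  rw [hzero] at hcoeff
  have hKK : cnk K K ≠ 0 := by
    simp [cnk, Nat.descFactorial_self]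
    exact Nat.factorial_ne_zero K
  have h1 : coeff m0 ω ≠ 0 := Finsupp.mem_support_iff.1 hm0supp
  have h2 : (m0 (((1:Fin 3), false), K) : ℂ) ≠ 0 := Nat.cast_ne_zero.2 hm0GK
  have := mul_ne_zero h1 (mul_ne_zero h2 (mul_ne_zero (by norm_num : (-2⁻¹ : ℂ) ≠ 0) hKK))
  exact this hcoeff.symm
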